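/- Let H be a nondegenerate graph property closed under union with K₁, G a graph, and v ∈ V(G). If v belongs to no minimum dominating H-set of G, then γ_H(G − v) = γ_H(G). -/

import Mathlib

open SimpleGraph

/-- A graph property: a class of finite simple graphs on arbitrary vertex types. -/
abbrev GraphProp := ∀ (V : Type), SimpleGraph V → Prop

/-- Closure under graph isomorphism. -/
def IsoClosed (P : GraphProp) : Prop :=
  ∀ (V W : Type) (G : SimpleGraph V) (H : SimpleGraph W), Nonempty (G ≃g H) → P V G → P W H

/-- A property is nondegenerate if it contains all edgeless graphs. -/
def Nondegenerate (P : GraphProp) : Prop :=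
  IsoClosed P ∧ ∀ (V : Type), P V ⊥

/-- Closed under induced subgraphs. -/
def InducedHereditary (P : GraphProp) : Prop :=
  IsoClosed P ∧ ∀ (V : Type) (G : SimpleGraph V) (s : Set V), P V G → P s (G.induce s)

/-- Closed under all subgraphs. -/
def Hereditary (P : GraphProp) : Prop :=
  InducedHereditary P ∧ ∀ (V : Type) (G G' : SimpleGraph V), G' ≤ G → P V G → P V G'

/-- The graph `G` together with one new isolated vertex. -/
def addK1 {V : Type} (G : SimpleGraph V) : SimpleGraph (V ⊕ Unit) where
  Adj a b := ∃ x y, a = Sum.inl x ∧ b = Sum.inl y ∧ G.Adj x y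
  symm := by constructor; rintro a b ⟨x, y, rfl, rfl, h⟩; exact ⟨y, x, rfl, rfl, h.symm⟩
  loopless := by constructor; rintro a ⟨x, y, rfl, hy, h⟩; simp only [Sum.inl.injEq] at hy; subst hy; exact G.irrefl h

/-- Closure under disjoint union with `K₁`. -/
def ClosedUnderK1 (P : GraphProp) : Prop :=
  ∀ (V : Type) (G : SimpleGraph V), P V G → P (V ⊕ Unit) (addK1 G)

/-- `S` is a dominating set of `G`. -/
def IsDominating {V : Type} (G : SimpleGraph V) (S : Set V) : Prop :=
  ∀ v ∉ S, ∃ u ∈ S, G.Adj u v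

/-- `S` is a dominating set inducing a subgraph with property `P`. -/
def IsDomPSet (P : GraphProp) {V : Type} (G : SimpleGraph V) (S : Set V) : Prop :=
  IsDominating G S ∧ P S (G.induce S)

/-- The domination number with respect to the property `P`. -/
noncomputable def gammaP (P : GraphProp) {V : Type} [Fintype V] (G : SimpleGraph V) : ℕ :=
  sInf (Set.ncard '' {S : Set V | IsDomPSet P G S})

/-- A minimum dominating `P`-set. -/
def IsGammaSet (P : GraphProp) {V : Type} [Fintype V] (G : SimpleGraph V) (S : Set V) : Prop :=
  IsDomPSet P G S ∧ S.ncard = gammaP P G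

/-- The ordinary domination number. -/
noncomputable def gamma {V : Type} [Fintype V] (G : SimpleGraph V) : ℕ :=
  sInf (Set.ncard '' {S : Set V | IsDominating G S})

/-- The graph obtained from `G` by deleting the edge `uv` and replacing it by the
path `u - x₀ - x₁ - ⋯ - x_{t-1} - v` through `t` new vertices. -/
def subdiv {V : Type} (G : SimpleGraph V) (u v : V) (t : ℕ) : SimpleGraph (V ⊕ Fin t) where
  Adj a b := match a, b with
    | Sum.inl a, Sum.inl b => G.Adj a b ∧ ¬((a = u ∧ b = v) ∨ (a = v ∧ b = u))
    | Sum.inl a, Sum.inr i => (a = u ∧ (i : ℕ) = 0) ∨ (a = v ∧ (i : ℕ) + 1 = t)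
    | Sum.inr i, Sum.inl a => (a = u ∧ (i : ℕ) = 0) ∨ (a = v ∧ (i : ℕ) + 1 = t)
    | Sum.inr i, Sum.inr j => (i : ℕ) + 1 = (j : ℕ) ∨ (j : ℕ) + 1 = (i : ℕ)
  symm := by
    constructor
    rintro (a | i) (b | j) h
    · exact ⟨h.1.symm, fun hc => h.2 (by tauto)⟩
    · exact h
    · exact h
    · tauto
  loopless := by
    constructor
    rintro (a | i) h
    · exact G.irrefl h.1
    · omega

/-- The private neighbour set `pn_G[x, X] = {y : N[y,G] ∩ X = {x}}`. -/
def pn {V : Type} (G : SimpleGraph V) (X : Set V) (x : V) : Set V :=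
  {y | insert y (G.neighborSet y) ∩ X = {x}}

/-- The graph `G` with the vertex `v` deleted. -/
abbrev delVert {V : Type} (G : SimpleGraph V) (v : V) : SimpleGraph {w : V // w ≠ v} :=
  G.induce {w : V | w ≠ v}

/-- An independent set. -/
def IsIndep {V : Type} (G : SimpleGraph V) (S : Set V) : Prop :=
  S.Pairwise fun a b => ¬ G.Adj a b


/-!
A `γ_H`-set `M` of `G` avoids `v`, so it is a dominating `H`-set of `G - v`, whence
`γ_H(G - v) ≤ γ_H(G)`. Conversely, a `γ_H`-set `S` of `G - v` either dominates `v`, and is then a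
dominating `H`-set of `G`, or does not, and then `S ∪ {v}` is one: `v` is an isolated vertex of
`G[S ∪ {v}]`, which is where closure under union with `K₁` enters. In the second case
`γ_H(G) ≤ |S| + 1`, with equality impossible because `S ∪ {v}` would be a `γ_H`-set containing `v`.
-/

variable {P : GraphProp} {V : Type} {G : SimpleGraph V}

lemma IsIndep.induce_eq_bot {S : Set V} (h : IsIndep G S) : G.induce S = ⊥ := by
  ext a b
  simpa using fun hab => h a.2 b.2 hab.ne hab

lemma isDominating_of_maximal_isIndep {S : Set V} (h : Maximal (IsIndep G) S) :
    IsDominating G S := by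
  intro w hw
  by_contra! hno
  refine hw (h.mem_of_prop_insert ?_)
  exact Set.pairwise_insert.2 ⟨h.prop, fun b hb _ => ⟨fun hwb => hno b hb hwb.symm, hno b hb⟩⟩

lemma exists_isDomPSet [Finite V] (hP : Nondegenerate P) (G : SimpleGraph V) :
    ∃ S, IsDomPSet P G S := by
  obtain ⟨S, -, hS⟩ := Finite.exists_le_maximal (p := IsIndep G) (a := ∅) (Set.pairwise_empty _)
  refine ⟨S, isDominating_of_maximal_isIndep hS, ?_⟩
  rw [hS.prop.induce_eq_bot]
  exact hP.2 S

lemma gammaP_le [Fintype V] {S : Set V} (hS : IsDomPSet P G S) : gammaP P G ≤ S.ncard :=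
  Nat.sInf_le ⟨S, hS, rfl⟩

lemma exists_isGammaSet [Fintype V] (hP : Nondegenerate P) (G : SimpleGraph V) :
    ∃ S, IsGammaSet P G S := by
  obtain ⟨S₀, hS₀⟩ := exists_isDomPSet hP G
  obtain ⟨S, hS, hcard⟩ := Nat.sInf_mem (s := Set.ncard '' {S | IsDomPSet P G S}) ⟨_, S₀, hS₀, rfl⟩
  exact ⟨S, hS, hcard⟩

noncomputable def addK1InduceIso (v : V) (S : Set V) (hvS : v ∉ S) (hadj : ∀ u ∈ S, ¬ G.Adj u v) :
    addK1 (G.induce S) ≃g G.induce (insert v S) := by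
  classical
  exact
  { (Equiv.Set.insert hvS).symm with
    map_rel_iff' := by
      rintro (a | ⟨⟩) (b | ⟨⟩)
      · simp [addK1]
      · simpa [addK1] using hadj a a.2
      · simpa [addK1] using fun h => hadj b b.2 h.symm
      · simp [addK1] }

def induceInduceIso (s : Set V) (T : Set s) :
    (G.induce s).induce T ≃g G.induce (Subtype.val '' T) where
  toFun x := ⟨x.1.1, x.1, x.2, rfl⟩
  invFun y := ⟨⟨y.1, by obtain ⟨a, -, ha⟩ := y.2; exact ha ▸ a.2⟩,
    by obtain ⟨a, ha, hay⟩ := y.2; exact Set.mem_of_eq_of_mem (Subtype.ext hay.symm) ha⟩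
  left_inv _ := rfl
  right_inv _ := rfl
  map_rel_iff' := Iff.rfl

section InducedSubgraph

variable {s : Set V}

lemma IsDominating.induce_preimage_val {M : Set V} (hM : IsDominating G M) (hMs : M ⊆ s) :
    IsDominating (G.induce s) (Subtype.val ⁻¹' M) := fun x hx => by
  obtain ⟨u, huM, hadj⟩ := hM x hx
  exact ⟨⟨u, hMs huM⟩, huM, hadj⟩

lemma IsDominating.exists_adj_image_val {T : Set s} (hT : IsDominating (G.induce s) T) {x : V}
    (hxs : x ∈ s) (hxT : x ∉ Subtype.val '' T) : ∃ u ∈ Subtype.val '' T, G.Adj u x := by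
  obtain ⟨u, huT, hadj⟩ := hT ⟨x, hxs⟩ fun h => hxT ⟨_, h, rfl⟩
  exact ⟨u, ⟨u, huT, rfl⟩, hadj⟩

lemma IsDomPSet.induce_preimage_val (hP : IsoClosed P) {M : Set V} (hM : IsDomPSet P G M)
    (hMs : M ⊆ s) : IsDomPSet P (G.induce s) (Subtype.val ⁻¹' M) := by
  refine ⟨hM.1.induce_preimage_val hMs, hP _ _ _ _ ⟨(induceInduceIso s _).symm⟩ ?_⟩
  rw [Set.image_preimage_eq_of_subset (Subtype.range_coe ▸ hMs)]
  exact hM.2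

lemma IsoClosed.induce_image_val (hP : IsoClosed P) {T : Set s}
    (hT : P T ((G.induce s).induce T)) : P (Subtype.val '' T) (G.induce (Subtype.val '' T)) :=
  hP _ _ _ _ ⟨induceInduceIso s T⟩ hT

end InducedSubgraph

lemma IsDomPSet.image_val_or_insert (hP : IsoClosed P) (hK : ClosedUnderK1 P) {v : V}
    {S : Set {w // w ≠ v}} (hS : IsDomPSet P (delVert G v) S) :
    IsDomPSet P G (Subtype.val '' S) ∨ IsDomPSet P G (insert v (Subtype.val '' S)) := by
  have hPS := hP.induce_image_val hS.2
  by_cases hdom : ∃ u ∈ Subtype.val '' S, G.Adj u v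
  · refine Or.inl ⟨fun x hxS => ?_, hPS⟩
    obtain rfl | hxv := eq_or_ne x v
    · exact hdom
    · exact hS.1.exists_adj_image_val hxv hxS
  · push Not at hdom
    have hvS : v ∉ Subtype.val '' S := fun ⟨w, _, hw⟩ => w.2 hw
    refine Or.inr ⟨fun x hx => ?_, hP _ _ _ _ ⟨addK1InduceIso v _ hvS hdom⟩ (hK _ _ hPS)⟩
    obtain ⟨u, huS, hadj⟩ := hS.1.exists_adj_image_val (fun hxv => hx (.inl hxv)) (hx ∘ .inr)
    exact ⟨u, .inr huS, hadj⟩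

/-- if `v` belongs to no `γ_H`-set of `G` then `γ_H(G − v) = γ_H(G)`. -/
theorem gammaP_delVert_eq (P : GraphProp) (h1 : Nondegenerate P) (h2 : ClosedUnderK1 P)
    {V : Type} [Fintype V] [DecidableEq V] (G : SimpleGraph V) (v : V)
    (hv : ∀ M : Set V, IsGammaSet P G M → v ∉ M) :
    gammaP P (delVert G v) = gammaP P G := by
  obtain ⟨M, hM⟩ := exists_isGammaSet h1 G
  have hMv : M ⊆ {w | w ≠ v} := fun w hw hwv => hv M hM (hwv ▸ hw)
  have hle : gammaP P (delVert G v) ≤ gammaP P G :=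
    calc gammaP P (delVert G v) ≤ (Subtype.val ⁻¹' M : Set {w // w ≠ v}).ncard :=
          gammaP_le (hM.1.induce_preimage_val h1.1 hMv)
      _ = gammaP P G := (Set.ncard_preimage_of_injective_subset_range Subtype.val_injective
          (Subtype.range_coe ▸ hMv)).trans hM.2
  obtain ⟨S, hS⟩ := exists_isGammaSet h1 (delVert G v)
  have hcard : (Subtype.val '' S).ncard = gammaP P (delVert G v) :=
    (Set.ncard_image_of_injective S Subtype.val_injective).trans hS.2
  refine le_antisymm hle ?_
  rcases hS.1.image_val_or_insert h1.1 h2 with hS' | hS'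
  · exact hcard ▸ gammaP_le hS'
  · have hvS : v ∉ Subtype.val '' S := fun ⟨w, _, hw⟩ => w.2 hw
    have hcard' : (insert v (Subtype.val '' S)).ncard = gammaP P (delVert G v) + 1 :=
      hcard ▸ Set.ncard_insert_of_notMem hvS
    -- equality would make `insert v S` a `γ_H`-set containing `v`
    have hne : gammaP P G ≠ gammaP P (delVert G v) + 1 := fun h =>
      hv _ ⟨hS', hcard'.trans h.symm⟩ (Set.mem_insert v _)
    have := hcard' ▸ gammaP_le hS'
    omega
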